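/- Let G, G' be finite groups and f : G → G' a function such that Pr_{r₁,r₂∈G}[f(r₁r₂) = f(r₁)f(r₂)] ≥ 9/10, where r₁, r₂ are uniformly random elements of G. Then there exists a group homomorphism φ : G → G' such that Pr_{x∈G}[f(x) ≠ φ(x)] ≤ 1/10, and this homomorphism is unique. -/

import Mathlib

/-!
Each `y` casts the vote `f (x * y) * (f y)⁻¹` for the value at `x`. If the test passes at
`(z, w)` and at `(x * z, w)`, the votes of `z * w` and `z` at `x` coincide; so at least `4/5` of
all pairs of votes at `x` agree, and some value `φ x` receives `4/5` of the votes. The vote of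
`x₂ * y` at `x₁` times the vote of `y` at `x₂` is the vote of `y` at `x₁ * x₂`, and some `y` votes
with all three majorities, so `φ (x₁ * x₂) = φ x₁ * φ x₂`.

If exactly one of `f x`, `f y`, `f (x * y)` differs from `φ`, the test fails at `(x, y)`. As
`x`, `y` and `x * y` are pairwise independent, a disagreement density `η` forces a failure
density at least `3η - 6η²`. Together with the crude bound `η ≤ 1/8` (a disagreeing `x` fails
against all of its majority voters) this gives `η ≤ 1/10`. Two homomorphisms within `1/10` of `f`
agree on more than half of `G`, hence on a subgroup which must be all of `G`.
-/

open Finset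

namespace Finset

variable {α β : Type*} [Fintype α]

lemma card_add_card_le_card_and_add (P Q : α → Prop) [DecidablePred P] [DecidablePred Q] :
    #{a | P a} + #{a | Q a} ≤ #{a | P a ∧ Q a} + Fintype.card α := by
  simp only [card_filter, Fintype.card_eq_sum_ones, ← sum_add_distrib]
  exact sum_le_sum fun a _ => by split_ifs <;> simp_all

lemma exists_and_and_of_two_mul_card_lt (P Q R : α → Prop) [DecidablePred P] [DecidablePred Q]
    [DecidablePred R] (h : 2 * Fintype.card α < #{a | P a} + #{a | Q a} + #{a | R a}) :
    ∃ a, P a ∧ Q a ∧ R a := by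
  by_contra! hPQR
  simp only [card_filter, Fintype.card_eq_sum_ones, mul_sum, ← sum_add_distrib] at h
  refine (sum_le_sum fun a _ => ?_).not_gt h
  have := hPQR a
  split_ifs <;> simp_all

lemma card_add_card_add_card_le (P Q R F : α → Prop) [DecidablePred P] [DecidablePred Q]
    [DecidablePred R] [DecidablePred F]
    (hF : ∀ a, (P a ∧ ¬Q a ∧ ¬R a) ∨ (¬P a ∧ Q a ∧ ¬R a) ∨ (¬P a ∧ ¬Q a ∧ R a) → F a) :
    #{a | P a} + #{a | Q a} + #{a | R a} ≤
      #{a | F a} + 2 * (#{a | P a ∧ Q a} + #{a | P a ∧ R a} + #{a | Q a ∧ R a}) := by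
  simp only [card_filter, mul_sum, ← sum_add_distrib]
  refine sum_le_sum fun a _ => ?_
  have := hF a
  split_ifs <;> simp_all

lemma card_filter_equiv [Fintype β] (e : α ≃ β) (P : β → Prop) [DecidablePred P] :
    #{a | P (e a)} = #{b | P b} :=
  card_equiv e (by simp)

lemma card_filter_fst_mem_eq_sum [DecidableEq α] [Fintype β] (s : Finset α) (P : α → β → Prop)
    [∀ x, DecidablePred (P x)] :
    #{p : α × β | p.1 ∈ s ∧ P p.1 p.2} = ∑ x ∈ s, #{y | P x y} := by
  simp only [card_filter, Fintype.sum_prod_type, ite_and]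
  simp only [sum_ite_irrel, sum_boole, Nat.cast_id, sum_const_zero, sum_ite_mem, univ_inter]

lemma card_filter_fst_mem_and_snd_mem [DecidableEq α] [Fintype β] [DecidableEq β]
    (s : Finset α) (t : Finset β) : #{p : α × β | p.1 ∈ s ∧ p.2 ∈ t} = #s * #t := by
  rw [← card_product]
  congr 1
  ext
  simp

lemma exists_card_filter_eq_le_card_mul [Nonempty α] [DecidableEq β] (g : α → β) :
    ∃ a, #{p : α × α | g p.1 = g p.2} ≤ Fintype.card α * #{x | g x = g a} := by
  classical
  obtain ⟨a, ha⟩ := Finite.exists_max fun a => #{x | g x = g a}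
  refine ⟨a, ?_⟩
  have hsum := card_filter_fst_mem_eq_sum univ fun x y => g x = g y
  simp only [mem_univ, true_and] at hsum
  rw [hsum, ← card_univ, ← smul_eq_mul]
  refine sum_le_card_nsmul _ _ _ fun x _ => ?_
  simpa only [eq_comm] using ha x

end Finset

lemma MonoidHom.eq_of_card_lt_two_mul {G H : Type*} [Group G] [Finite G] [Monoid H]
    (φ ψ : G →* H) (h : Nat.card G < 2 * Nat.card {x // φ x = ψ x}) : φ = ψ := by
  have hcard := Nat.eq_of_dvd_of_lt_two_mul Nat.card_pos.ne' (φ.eqLocus ψ).card_subgroup_dvd_card h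
  exact MonoidHom.ext fun x => (Subgroup.eq_top_of_card_eq _ hcard.symm).ge (Subgroup.mem_top x)

namespace BLR

variable {G G' : Type*} [Group G] [Group G'] (f : G → G')

def vote (x y : G) : G' := f (x * y) * (f y)⁻¹

lemma vote_mul_vote (x₁ x₂ y : G) : vote f x₁ (x₂ * y) * vote f x₂ y = vote f (x₁ * x₂) y := by
  simp [vote, mul_assoc]

lemma vote_mul_eq_vote {x z w : G} (hzw : f (z * w) = f z * f w)
    (hxzw : f (x * z * w) = f (x * z) * f w) : vote f x (z * w) = vote f x z := by
  simp [vote, ← mul_assoc, hzw, hxzw]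

variable [Fintype G] [DecidableEq G']

def IsMajorityVote (φ₀ : G → G') : Prop :=
  ∀ x, 4 * Fintype.card G ≤ 5 * #{y | vote f x y = φ₀ x}

lemma two_mul_card_le_card_vote_eq_add (x : G) :
    2 * #{p : G × G | f (p.1 * p.2) = f p.1 * f p.2} ≤
      #{p : G × G | vote f x p.1 = vote f x p.2} + Fintype.card G ^ 2 := by
  have hshift : #{p : G × G | f (x * p.1 * p.2) = f (x * p.1) * f p.2} =
      #{p : G × G | f (p.1 * p.2) = f p.1 * f p.2} :=
    card_filter_equiv ((Equiv.mulLeft x).prodCongr (Equiv.refl G))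
      fun p => f (p.1 * p.2) = f p.1 * f p.2
  have hboth := card_add_card_le_card_and_add
    (fun p : G × G => f (x * p.1 * p.2) = f (x * p.1) * f p.2)
    (fun p => f (p.1 * p.2) = f p.1 * f p.2)
  have hvote : #{p : G × G | f (x * p.1 * p.2) = f (x * p.1) * f p.2 ∧
      f (p.1 * p.2) = f p.1 * f p.2} ≤ #{p : G × G | vote f x p.1 = vote f x p.2} :=
    calc _ ≤ #{p : G × G | vote f x p.1 = vote f x (p.1 * p.2)} :=
          card_le_card <| monotone_filter_right _ fun p _ h => (vote_mul_eq_vote f h.2 h.1).symm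
      _ = _ := card_filter_equiv (Equiv.prodShear (Equiv.refl G) Equiv.mulLeft)
          fun p => vote f x p.1 = vote f x p.2
  rw [Fintype.card_prod, ← sq] at hboth
  omega

lemma exists_isMajorityVote
    (h : 9 * Fintype.card G ^ 2 ≤ 10 * #{p : G × G | f (p.1 * p.2) = f p.1 * f p.2}) :
    ∃ φ₀ : G → G', IsMajorityVote f φ₀ := by
  choose y hy using fun x => exists_card_filter_eq_le_card_mul (vote f x)
  refine ⟨fun x => vote f x (y x), fun x => ?_⟩
  have hcollide := two_mul_card_le_card_vote_eq_add f x
  have : Fintype.card G * (4 * Fintype.card G) ≤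
      Fintype.card G * (5 * #{z | vote f x z = vote f x (y x)}) := by
    nlinarith [hy x]
  exact Nat.le_of_mul_le_mul_left this Fintype.card_pos

lemma map_mul_of_isMajorityVote {φ₀ : G → G'} (hφ₀ : IsMajorityVote f φ₀) (x₁ x₂ : G) :
    φ₀ (x₁ * x₂) = φ₀ x₁ * φ₀ x₂ := by
  have hshift : #{y | vote f x₁ (x₂ * y) = φ₀ x₁} = #{y | vote f x₁ y = φ₀ x₁} :=
    card_filter_equiv (Equiv.mulLeft x₂) fun y => vote f x₁ y = φ₀ x₁
  have h₁ := hφ₀ x₁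
  have h₂ := hφ₀ x₂
  have h₁₂ := hφ₀ (x₁ * x₂)
  have hpos : 0 < Fintype.card G := Fintype.card_pos
  obtain ⟨y, hy₁, hy₂, hy₁₂⟩ := exists_and_and_of_two_mul_card_lt
    (fun y => vote f x₁ (x₂ * y) = φ₀ x₁) (fun y => vote f x₂ y = φ₀ x₂)
    (fun y => vote f (x₁ * x₂) y = φ₀ (x₁ * x₂)) (by omega)
  rw [← hy₁, ← hy₂, ← hy₁₂, vote_mul_vote]

lemma ten_mul_card_map_mul_ne_le
    (h : 9 * Fintype.card G ^ 2 ≤ 10 * #{p : G × G | f (p.1 * p.2) = f p.1 * f p.2}) :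
    10 * #{p : G × G | f (p.1 * p.2) ≠ f p.1 * f p.2} ≤ Fintype.card G ^ 2 := by
  have := card_filter_add_card_filter_not (s := univ)
    fun p : G × G => f (p.1 * p.2) = f p.1 * f p.2
  simp only [← ne_eq, card_univ, Fintype.card_prod, ← sq] at this
  omega

lemma eight_mul_hammingDist_le
    (h : 9 * Fintype.card G ^ 2 ≤ 10 * #{p : G × G | f (p.1 * p.2) = f p.1 * f p.2})
    {φ₀ : G → G'} (hφ₀ : IsMajorityVote f φ₀) : 8 * hammingDist f φ₀ ≤ Fintype.card G := by
  classical
  set B : Finset G := {x | f x ≠ φ₀ x}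
  change 8 * #B ≤ _
  have hrows : #B * (4 * Fintype.card G) ≤
      5 * #{p : G × G | p.1 ∈ B ∧ vote f p.1 p.2 = φ₀ p.1} := by
    rw [card_filter_fst_mem_eq_sum B fun x y => vote f x y = φ₀ x, mul_sum, ← smul_eq_mul]
    exact card_nsmul_le_sum _ _ _ fun x _ => hφ₀ x
  have hfail : #{p : G × G | p.1 ∈ B ∧ vote f p.1 p.2 = φ₀ p.1} ≤
      #{p : G × G | f (p.1 * p.2) ≠ f p.1 * f p.2} := by
    refine card_le_card <| monotone_filter_right _ fun p _ ⟨hB, hvote⟩ hpass => ?_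
    exact (mem_filter.1 hB).2 (by rw [← hvote, vote, hpass, mul_inv_cancel_right])
  have := ten_mul_card_map_mul_ne_le f h
  have : Fintype.card G * (8 * #B) ≤ Fintype.card G * Fintype.card G := by nlinarith
  exact Nat.le_of_mul_le_mul_left this Fintype.card_pos

lemma three_mul_hammingDist_mul_le (φ : G →* G') :
    3 * hammingDist f φ * Fintype.card G ≤
      #{p : G × G | f (p.1 * p.2) ≠ f p.1 * f p.2} + 6 * hammingDist f φ ^ 2 := by
  classical
  set B : Finset G := {x | f x ≠ φ x}
  change 3 * #B * _ ≤ _ + 6 * #B ^ 2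
  have hmem : ∀ x, x ∈ B ↔ f x ≠ φ x := by simp [B]
  have key := card_add_card_add_card_le (fun p : G × G => p.1 ∈ B) (fun p => p.2 ∈ B)
    (fun p => p.1 * p.2 ∈ B) (fun p => f (p.1 * p.2) ≠ f p.1 * f p.2) (by
      rintro ⟨x, y⟩ hone hpass
      simp only [hmem, map_mul, not_not] at hone
      rcases hone with ⟨hx, hy, hxy⟩ | ⟨hx, hy, hxy⟩ | ⟨hx, hy, hxy⟩ <;> simp_all)
  -- `e₁ (x, y) = (x, x * y)` and `e₂ (x, y) = (y, x * y)`
  let e₁ : G × G ≃ G × G := Equiv.prodShear (Equiv.refl G) Equiv.mulLeft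
  let e₂ : G × G ≃ G × G :=
    (Equiv.prodComm G G).trans (Equiv.prodShear (Equiv.refl G) Equiv.mulRight)
  have hP : #{p : G × G | p.1 ∈ B} = #B * Fintype.card G := by
    simpa using card_filter_fst_mem_and_snd_mem B (univ : Finset G)
  have hQ : #{p : G × G | p.2 ∈ B} = Fintype.card G * #B := by
    simpa using card_filter_fst_mem_and_snd_mem (univ : Finset G) B
  have hR : #{p : G × G | p.1 * p.2 ∈ B} = Fintype.card G * #B :=
    (card_filter_equiv e₁ fun q => q.2 ∈ B).trans hQ
  have hPQ := card_filter_fst_mem_and_snd_mem B B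
  have hPR : #{p : G × G | p.1 ∈ B ∧ p.1 * p.2 ∈ B} = #B * #B :=
    (card_filter_equiv e₁ fun q => q.1 ∈ B ∧ q.2 ∈ B).trans hPQ
  have hQR : #{p : G × G | p.2 ∈ B ∧ p.1 * p.2 ∈ B} = #B * #B :=
    (card_filter_equiv e₂ fun q => q.1 ∈ B ∧ q.2 ∈ B).trans hPQ
  rw [hP, hQ, hR, hPQ, hPR, hQR] at key
  linarith

lemma ten_mul_hammingDist_le
    (h : 9 * Fintype.card G ^ 2 ≤ 10 * #{p : G × G | f (p.1 * p.2) = f p.1 * f p.2})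
    (φ : G →* G') (h8 : 8 * hammingDist f φ ≤ Fintype.card G) :
    10 * hammingDist f φ ≤ Fintype.card G := by
  have h3 := three_mul_hammingDist_mul_le f φ
  have hfail := ten_mul_card_map_mul_ne_le f h
  have : Fintype.card G * (45 * hammingDist f φ) ≤ Fintype.card G * (2 * Fintype.card G) := by
    nlinarith [Nat.mul_le_mul_right (hammingDist f φ) h8]
  have := Nat.le_of_mul_le_mul_left this Fintype.card_pos
  omega

lemma exists_hammingDist_le
    (h : 9 * Fintype.card G ^ 2 ≤ 10 * #{p : G × G | f (p.1 * p.2) = f p.1 * f p.2}) :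
    ∃ φ : G →* G', 10 * hammingDist f φ ≤ Fintype.card G := by
  obtain ⟨φ₀, hφ₀⟩ := exists_isMajorityVote f h
  let φ : G →* G' := MonoidHom.mk' φ₀ (map_mul_of_isMajorityVote f hφ₀)
  exact ⟨φ, ten_mul_hammingDist_le f h φ (eight_mul_hammingDist_le f h hφ₀)⟩

lemma eq_of_hammingDist_le {φ ψ : G →* G'} (hφ : 10 * hammingDist f φ ≤ Fintype.card G)
    (hψ : 10 * hammingDist f ψ ≤ Fintype.card G) : φ = ψ := by
  refine MonoidHom.eq_of_card_lt_two_mul φ ψ ?_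
  have htri := hammingDist_triangle_left (⇑φ) ψ f
  have hsplit := card_filter_add_card_filter_not (s := univ) fun x => φ x = ψ x
  simp only [← ne_eq, card_univ] at hsplit
  change _ + hammingDist (⇑φ) ψ = _ at hsplit
  simp only [Nat.card_eq_fintype_card, Fintype.card_subtype]
  have := Fintype.card_pos (α := G)
  omega

end BLR

theorem homomorphism_test_general
    {G G' : Type*} [Group G] [Group G'] [Finite G]
    (f : G → G')
    (h : 9 * Nat.card G ^ 2 ≤
      10 * Nat.card {p : G × G // f (p.1 * p.2) = f p.1 * f p.2}) :
    ∃! φ : G →* G', 10 * Nat.card {x : G // f x ≠ φ x} ≤ Nat.card G := by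
  classical
  have := Fintype.ofFinite G
  simp only [Nat.card_eq_fintype_card, Fintype.card_subtype] at h ⊢
  obtain ⟨φ, hφ⟩ := BLR.exists_hammingDist_le f h
  exact ⟨φ, hφ, fun ψ hψ => BLR.eq_of_hammingDist_le f hψ hφ⟩

theorem homomorphism_test
    {G G' : Type*} [Group G] [Group G'] [Finite G] [Finite G']
    (f : G → G')
    (h : 9 * Nat.card G ^ 2 ≤
      10 * Nat.card {p : G × G // f (p.1 * p.2) = f p.1 * f p.2}) :
    ∃! φ : G →* G', 10 * Nat.card {x : G // f x ≠ φ x} ≤ Nat.card G :=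
  homomorphism_test_general f h
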